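/- arXiv:2503.19696 — 3 statements merged into one kernel-verified Lean document; each statement's English description precedes it below -/
import Mathlib

section
/- For every integer i≥0, every integer j, and every n∈ℕ, the identities f_{i+1,F(i+1)+j}(n) = f_{i,j}(a(n)) and f_{i+2,j}(n) = f_{i,j}(b(n)) hold; consequently, R_{i,j} is the disjoint union of R_{i+1,F(i+1)+j} and R_{i+2,j}, i.e. R_{i,j} = R_{i+1,F(i+1)+j} ∪ R_{i+2,j} and R_{i+1,F(i+1)+j} ∩ R_{i+2,j} = ∅. -/
/-- The golden ratio φ = (1 + √5)/2. -/
noncomputable def phi : ℝ := (1 + Real.sqrt 5) / 2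

/-- The lower Wythoff sequence a(n) = ⌊nφ⌋. -/
noncomputable def wa (n : ℕ) : ℕ := ⌊(n : ℝ) * phi⌋₊

/-- The upper Wythoff sequence b(n) = ⌊nφ²⌋. -/
noncomputable def wb (n : ℕ) : ℕ := ⌊(n : ℝ) * phi ^ 2⌋₊

/-- f_{i,j}(n) = F(i+1)·a(n) + F(i)·n − j. -/
noncomputable def fij (i : ℕ) (j : ℤ) (n : ℕ) : ℤ :=
  (Nat.fib (i + 1) : ℤ) * wa n + (Nat.fib i : ℤ) * n - j

/-- R_{i,j} = { f_{i,j}(n) : n ∈ ℕ, n ≥ 1 }. -/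
def R (i : ℕ) (j : ℤ) : Set ℤ := {m | ∃ n : ℕ, 0 < n ∧ fij i j n = m}

/-!
Write `x = nφ - a(n) ∈ [0, 1)`. From `φ² = φ + 1` one gets
`a(n)φ = a(n) + n - x(φ - 1)` and `(a(n) + n)φ = 2a(n) + n + x(2 - φ)`, and since
`0 < φ - 1 < 1` and `0 < 2 - φ < 1` (with `x > 0` for `n > 0`, as `φ` is irrational) this gives
`a(a(n)) = a(n) + n - 1` and `a(b(n)) = 2a(n) + n`, where `b(n) = a(n) + n`.
Together with the Fibonacci recursion these turn `f_{i,j} ∘ a` and `f_{i,j} ∘ b` into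
`f_{i+1,F(i+1)+j}` and `f_{i+2,j}`. Since `a` and `b` partition the positive integers
(Rayleigh's theorem, `1/φ + 1/φ² = 1`) and `f_{i,j}` is injective, the range of `f_{i,j}` is the
disjoint union of the two other ranges.
-/

open Set
open scoped symmDiff

theorem disjoint_of_symmDiff_eq {α : Type*} [GeneralizedBooleanAlgebra α] {a b c : α}
    (ha : a ≤ c) (h : a ∆ b = c) : Disjoint a b :=
  disjoint_iff.2 <| (h ▸ disjoint_symmDiff_inf a b).eq_bot_of_ge (inf_le_left.trans ha)

theorem natCast_mem_beattySeq_pos_iff {r : ℝ} (hr : 0 ≤ r) (m : ℕ) :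
    (m : ℤ) ∈ {beattySeq r k | k > 0} ↔ m ∈ (fun k : ℕ ↦ ⌊k * r⌋₊) '' Ioi 0 := by
  have hfloor (k : ℕ) : beattySeq r k = ⌊(k : ℝ) * r⌋₊ := by
    rw [beattySeq, Int.cast_natCast, Int.natCast_floor_eq_floor (by positivity)]
  constructor
  · rintro ⟨k, hk, hkm⟩
    lift k to ℕ using hk.le
    exact ⟨k, by exact_mod_cast hk, by rw [← Nat.cast_inj (R := ℤ), ← hfloor, hkm]⟩
  · rintro ⟨k, hk, rfl⟩
    exact ⟨k, by exact_mod_cast hk, hfloor k⟩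

lemma phi_pos : 0 < phi := Real.goldenRatio_pos

lemma one_lt_phi : 1 < phi := Real.one_lt_goldenRatio

lemma phi_lt_two : phi < 2 := Real.goldenRatio_lt_two

lemma phi_sq : phi ^ 2 = phi + 1 := Real.goldenRatio_sq

lemma irrational_phi : Irrational phi := Real.goldenRatio_irrational

lemma holderConjugate_phi_phi_sq : phi.HolderConjugate (phi ^ 2) := by
  rw [Real.holderConjugate_iff_eq_conjExponent one_lt_phi,
    eq_div_iff (sub_pos.2 one_lt_phi).ne']
  linear_combination phi * phi_sq

lemma wa_le_mul_phi (n : ℕ) : (wa n : ℝ) ≤ n * phi :=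
  Nat.floor_le (by positivity [phi_pos])

lemma mul_phi_lt_wa_add_one (n : ℕ) : n * phi < wa n + 1 :=
  Nat.lt_floor_add_one _

lemma wa_lt_mul_phi {n : ℕ} (hn : 0 < n) : (wa n : ℝ) < n * phi :=
  (wa_le_mul_phi n).lt_of_ne fun h ↦ (irrational_phi.natCast_mul hn.ne').ne_nat (wa n) h.symm

lemma wb_eq_wa_add (n : ℕ) : wb n = wa n + n := by
  rw [wb, wa, phi_sq, mul_add, mul_one]
  exact Nat.floor_add_natCast (by positivity [phi_pos]) n

lemma wa_strictMono : StrictMono wa :=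
  strictMono_nat_of_lt_succ fun n ↦ Nat.lt_iff_add_one_le.2 <| Nat.le_floor <| by
    push_cast
    linarith [wa_le_mul_phi n, one_lt_phi]

lemma wa_pos {n : ℕ} (hn : 0 < n) : 0 < wa n := by
  simpa [wa] using wa_strictMono hn

lemma wa_wa {n : ℕ} (hn : 0 < n) : wa (wa n) + 1 = wa n + n := by
  obtain ⟨m, rfl⟩ := Nat.exists_eq_add_one_of_ne_zero hn.ne'
  suffices wa (wa (m + 1)) = wa (m + 1) + m by omega
  set a := wa (m + 1)
  have hx_pos : 0 < ((m + 1 : ℕ) * phi - a) * (phi - 1) :=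
    mul_pos (sub_pos.2 (wa_lt_mul_phi hn)) (sub_pos.2 one_lt_phi)
  have hx_lt : ((m + 1 : ℕ) * phi - a) * (phi - 1) < 1 :=
    mul_lt_one_of_nonneg_of_lt_one_left (sub_nonneg.2 (wa_le_mul_phi _))
      (sub_lt_iff_lt_add'.2 (mul_phi_lt_wa_add_one _)) (by linarith [phi_lt_two])
  have hmul : (a : ℝ) * phi = a + (m + 1 : ℕ) - ((m + 1 : ℕ) * phi - a) * (phi - 1) := by
    linear_combination ((m + 1 : ℕ) : ℝ) * phi_sq
  show ⌊(a : ℝ) * phi⌋₊ = a + m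
  rw [Nat.floor_eq_iff (by positivity [phi_pos]), hmul]
  push_cast at hx_pos hx_lt ⊢
  constructor <;> linarith

lemma wa_wb (n : ℕ) : wa (wb n) = 2 * wa n + n := by
  have hx_nonneg : 0 ≤ (n * phi - wa n) * (2 - phi) :=
    mul_nonneg (sub_nonneg.2 (wa_le_mul_phi n)) (sub_pos.2 phi_lt_two).le
  have hx_lt : (n * phi - wa n) * (2 - phi) < 1 :=
    mul_lt_one_of_nonneg_of_lt_one_left (sub_nonneg.2 (wa_le_mul_phi n))
      (sub_lt_iff_lt_add'.2 (mul_phi_lt_wa_add_one n)) (by linarith [one_lt_phi])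
  have hmul : ((wa n : ℝ) + n) * phi = 2 * wa n + n + (n * phi - wa n) * (2 - phi) := by
    linear_combination (n : ℝ) * phi_sq
  show ⌊((wb n : ℕ) : ℝ) * phi⌋₊ = _
  rw [Nat.floor_eq_iff (by positivity [phi_pos]), wb_eq_wa_add]
  push_cast
  rw [hmul]
  constructor <;> linarith

lemma image_wa_symmDiff_image_wb : (wa '' Ioi 0) ∆ (wb '' Ioi 0) = Ioi 0 := by
  ext m
  have hm := Set.ext_iff.1
    (irrational_phi.beattySeq_symmDiff_beattySeq_pos holderConjugate_phi_phi_sq) m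
  rwa [mem_symmDiff, natCast_mem_beattySeq_pos_iff phi_pos.le,
    natCast_mem_beattySeq_pos_iff (by positivity [phi_pos]), mem_ofPred_eq, Nat.cast_pos,
    ← mem_symmDiff] at hm

lemma disjoint_image_wa_image_wb : Disjoint (wa '' Ioi 0) (wb '' Ioi 0) :=
  disjoint_of_symmDiff_eq (image_subset_iff.2 fun _ ↦ wa_pos) image_wa_symmDiff_image_wb

lemma image_wa_union_image_wb : wa '' Ioi 0 ∪ wb '' Ioi 0 = Ioi 0 :=
  ((symmDiff_eq_sup _ _).2 disjoint_image_wa_image_wb).symm.trans image_wa_symmDiff_image_wb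

lemma fij_strictMono (i : ℕ) (j : ℤ) : StrictMono (fij i j) := by
  intro n m hnm
  have hwa : (wa n : ℤ) < wa m := by exact_mod_cast wa_strictMono hnm
  have hfib : (0 : ℤ) < Nat.fib (i + 1) := by exact_mod_cast Nat.fib_pos.2 i.succ_pos
  have hnm' : (n : ℤ) ≤ m := by exact_mod_cast hnm.le
  unfold fij
  exact sub_lt_sub_right (add_lt_add_of_lt_of_le (mul_lt_mul_of_pos_left hwa hfib)
    (mul_le_mul_of_nonneg_left hnm' (Int.natCast_nonneg _))) j

lemma fij_succ_eq_fij_wa (i : ℕ) (j : ℤ) {n : ℕ} (hn : 0 < n) :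
    fij (i + 1) (Nat.fib (i + 1) + j) n = fij i j (wa n) := by
  have h : (wa (wa n) : ℤ) + 1 = wa n + n := by exact_mod_cast wa_wa hn
  unfold fij
  rw [Nat.fib_add_two]
  push_cast
  linear_combination (-(Nat.fib (i + 1) : ℤ)) * h

lemma fij_add_two_eq_fij_wb (i : ℕ) (j : ℤ) (n : ℕ) :
    fij (i + 2) j n = fij i j (wb n) := by
  unfold fij
  rw [wa_wb, wb_eq_wa_add, Nat.fib_add_two, Nat.fib_add_two]
  push_cast
  ring

lemma R_eq_image (i : ℕ) (j : ℤ) : R i j = fij i j '' Ioi 0 := rfl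

theorem stmt_1 (i : ℕ) (j : ℤ) :
    (∀ n : ℕ, 0 < n → fij (i + 1) ((Nat.fib (i + 1) : ℤ) + j) n = fij i j (wa n)) ∧
    (∀ n : ℕ, 0 < n → fij (i + 2) j n = fij i j (wb n)) ∧
    R i j = R (i + 1) ((Nat.fib (i + 1) : ℤ) + j) ∪ R (i + 2) j ∧
    R (i + 1) ((Nat.fib (i + 1) : ℤ) + j) ∩ R (i + 2) j = ∅ := by
  have hRa : R (i + 1) (Nat.fib (i + 1) + j) = fij i j '' (wa '' Ioi 0) := by
    rw [R_eq_image, image_image]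
    exact image_congr fun n hn ↦ fij_succ_eq_fij_wa i j hn
  have hRb : R (i + 2) j = fij i j '' (wb '' Ioi 0) := by
    rw [R_eq_image, image_image]
    exact image_congr fun n _ ↦ fij_add_two_eq_fij_wb i j n
  refine ⟨fun n hn ↦ fij_succ_eq_fij_wa i j hn, fun n _ ↦ fij_add_two_eq_fij_wb i j n, ?_, ?_⟩
  · rw [hRa, hRb, ← image_union, image_wa_union_image_wb, R_eq_image]
  · rw [hRa, hRb, ← image_inter (fij_strictMono i j).injective,
      disjoint_image_wa_image_wb.inter_eq, image_empty]
end

section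
/- For every natural number n: ⌊φ⁻¹·⌊φ²n⌋⌋ = ⌊φn⌋ and ⌊φ⁻¹·(⌊φ²n⌋+1)⌋ = ⌊φn⌋. -/
theorem stmt_3 (n : ℕ) (hn : 0 < n) :
    ⌊phi⁻¹ * (⌊(n : ℝ) * phi ^ 2⌋ : ℝ)⌋ = ⌊(n : ℝ) * phi⌋ ∧
    ⌊phi⁻¹ * ((⌊(n : ℝ) * phi ^ 2⌋ : ℝ) + 1)⌋ = ⌊(n : ℝ) * phi⌋ := by
  have hs : Real.sqrt 5 ^ 2 = 5 := Real.sq_sqrt (by norm_num)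
  have hs0 : 0 ≤ Real.sqrt 5 := Real.sqrt_nonneg 5
  have hphi2 : phi ^ 2 = phi + 1 := by unfold phi; nlinarith
  have hpos : 0 < phi := by unfold phi; positivity
  set m : ℤ := ⌊(n : ℝ) * phi⌋ with hm
  have hm1 : (m : ℝ) ≤ (n : ℝ) * phi := Int.floor_le _
  have hm2 : (n : ℝ) * phi < m + 1 := Int.lt_floor_add_one _
  have hn0 : (0 : ℝ) < n := by exact_mod_cast hn
  have hphi1 : 1 < phi := by nlinarith
  have hfloor2 : ⌊(n : ℝ) * phi ^ 2⌋ = m + n := by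
    have : (n : ℝ) * phi ^ 2 = (n : ℝ) * phi + (n : ℤ) := by
      rw [hphi2]; push_cast; ring
    rw [this, Int.floor_add_intCast]
  constructor
  · rw [hfloor2, Int.floor_eq_iff]
    constructor
    · rw [inv_mul_eq_div, le_div_iff₀ hpos]
      push_cast
      nlinarith [mul_le_mul_of_nonneg_right hm1 (by linarith : (0:ℝ) ≤ phi - 1)]
    · rw [inv_mul_eq_div, div_lt_iff₀ hpos]
      push_cast
      nlinarith [mul_lt_mul_of_pos_right hm2 (by linarith : (0:ℝ) < phi - 1)]
  · rw [hfloor2, Int.floor_eq_iff]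
    constructor
    · rw [inv_mul_eq_div, le_div_iff₀ hpos]
      push_cast
      nlinarith [mul_le_mul_of_nonneg_right hm1 (by linarith : (0:ℝ) ≤ phi - 1)]
    · rw [inv_mul_eq_div, div_lt_iff₀ hpos]
      push_cast
      nlinarith [mul_lt_mul_of_pos_right hm2 (by linarith : (0:ℝ) < phi - 1)]
end

section
/- For every natural number k: ⌊(φ−1)·⌊φ²k⌋⌋ − ⌊φ²k⌋ = −k. -/
theorem stmt_16 (k : ℕ) (hk : 0 < k) :
    ⌊(phi - 1) * (⌊(k : ℝ) * phi ^ 2⌋ : ℝ)⌋ - ⌊(k : ℝ) * phi ^ 2⌋ = -(k : ℤ) := by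
  have h5 : Real.sqrt 5 ^ 2 = 5 := Real.sq_sqrt (by norm_num)
  have hs1 : (2:ℝ) < Real.sqrt 5 := by nlinarith [Real.sqrt_nonneg 5]
  have hs2 : Real.sqrt 5 < 3 := by nlinarith [Real.sqrt_nonneg 5]
  have hφ2 : phi ^ 2 = phi + 1 := by unfold phi; nlinarith
  have hφlt : phi < 2 := by unfold phi; linarith
  have hφgt : (3:ℝ)/2 < phi := by unfold phi; linarith
  set n : ℤ := ⌊(k : ℝ) * phi ^ 2⌋ with hn
  have hn1 : (n:ℝ) ≤ (k:ℝ) * phi ^ 2 := Int.floor_le _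
  have hn2 : (k:ℝ) * phi ^ 2 < (n:ℝ) + 1 := Int.lt_floor_add_one _
  rw [hφ2] at hn1 hn2
  have key : ⌊(phi - 1) * (n:ℝ)⌋ = n - k := by
    rw [Int.floor_eq_iff]
    push_cast
    constructor
    · nlinarith [mul_nonneg (show (0:ℝ) ≤ 2 - phi by linarith)
        (show (0:ℝ) ≤ (k:ℝ) * (phi + 1) - n by linarith), hφ2]
    · nlinarith [mul_pos (show (0:ℝ) < 2 - phi by linarith)
        (show (0:ℝ) < (n:ℝ) + 1 - (k:ℝ) * (phi + 1) by linarith), hφ2]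
  omega
end
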